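/- Let H be a real vector space with two inner products B and L. Fix m > 0 and a third quantity: suppose for each k there is an inner product B_k on H with B_k ≥ B in the sense that R_m(w) ≤ R_k(w) := B_k[w,w]/‖w‖_L² for all nonzero w, where R_m(w) := ‖w‖_B²/‖w‖_L², and suppose R_m(u_k) = R_k(u_k). If u_{k+1} is nonzero and satisfies B_k[u_{k+1}, φ] = R_m(u_k)⟨u_k, φ⟩_L for all φ ∈ H, then R_m(u_{k+1}) ‖u_{k+1}‖_L ≤ R_m(u_k) ‖u_k‖_L. -/

import Mathlib

namespace LinearMap.BilinForm

variable {V : Type*} [AddCommGroup V] [Module ℝ V]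

lemma apply_self_nonneg_of_pos {B : LinearMap.BilinForm ℝ V}
    (hB : ∀ x, x ≠ 0 → 0 < B x x) (x : V) : 0 ≤ B x x := by
  rcases eq_or_ne x 0 with rfl | hx
  · simp
  · exact (hB x hx).le

lemma apply_le_sqrt_mul_sqrt {B : LinearMap.BilinForm ℝ V} (hs : ∀ x, 0 ≤ B x x)
    (hB : LinearMap.IsSymm B) (x y : V) : B x y ≤ √(B x x) * √(B y y) := by
  rw [← Real.sqrt_mul (hs x)]
  exact (le_abs_self _).trans (Real.abs_le_sqrt (B.apply_sq_le_of_symm hs hB x y))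

end LinearMap.BilinForm

theorem stmt_15_general {V : Type*} [AddCommGroup V] [Module ℝ V]
    (B Bk L : LinearMap.BilinForm ℝ V)
    (hLsymm : ∀ x y, L x y = L y x)
    (hBpos : ∀ x, x ≠ 0 → 0 < B x x)
    (hLpos : ∀ x, x ≠ 0 → 0 < L x x)
    (hle : ∀ w : V, w ≠ 0 → B w w / L w w ≤ Bk w w / L w w)
    (u v : V) (hv : v ≠ 0)
    (hiter : ∀ φ : V, Bk v φ = (B u u / L u u) * L u φ) :
    (B v v / L v v) * Real.sqrt (L v v) ≤
      (B u u / L u u) * Real.sqrt (L u u) := by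
  set ρ := B u u / L u u
  have hL : ∀ x, 0 ≤ L x x := LinearMap.BilinForm.apply_self_nonneg_of_pos hLpos
  have hρ : 0 ≤ ρ := div_nonneg (LinearMap.BilinForm.apply_self_nonneg_of_pos hBpos u) (hL u)
  have hLv : 0 < L v v := hLpos v hv
  have energy : B v v ≤ ρ * √(L u u) * √(L v v) :=
    calc B v v ≤ Bk v v := (div_le_div_iff_of_pos_right hLv).mp (hle v hv)
      _ = ρ * L u v := hiter v
      _ ≤ ρ * (√(L u u) * √(L v v)) := mul_le_mul_of_nonneg_left
          (LinearMap.BilinForm.apply_le_sqrt_mul_sqrt hL ⟨hLsymm⟩ u v) hρ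
      _ = ρ * √(L u u) * √(L v v) := (mul_assoc ..).symm
  rw [div_mul_eq_mul_div, div_le_iff₀ hLv]
  calc B v v * √(L v v) ≤ ρ * √(L u u) * √(L v v) * √(L v v) :=
        mul_le_mul_of_nonneg_right energy (Real.sqrt_nonneg _)
    _ = ρ * √(L u u) * L v v := by rw [mul_assoc _ √(L v v), Real.mul_self_sqrt hLv.le]

/-- Monotonicity R_m(u_{k+1})‖u_{k+1}‖_L ≤ R_m(u_k)‖u_k‖_L for the
optimal-insulation iteration, abstractly: B is the nonlinear form, Bk the
Robin form at step k, with R_m ≤ R_k and R_m(u) = R_k(u). -/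
theorem stmt_15 {V : Type*} [AddCommGroup V] [Module ℝ V]
    (B Bk L : LinearMap.BilinForm ℝ V)
    (hBsymm : ∀ x y, B x y = B y x) (hBksymm : ∀ x y, Bk x y = Bk y x)
    (hLsymm : ∀ x y, L x y = L y x)
    (hBpos : ∀ x, x ≠ 0 → 0 < B x x) (hBkpos : ∀ x, x ≠ 0 → 0 < Bk x x)
    (hLpos : ∀ x, x ≠ 0 → 0 < L x x)
    (m : ℝ) (hm : 0 < m)
    (hle : ∀ w : V, w ≠ 0 → B w w / L w w ≤ Bk w w / L w w)
    (u v : V) (hu : u ≠ 0) (hv : v ≠ 0)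
    (heq : B u u / L u u = Bk u u / L u u)
    (hiter : ∀ φ : V, Bk v φ = (B u u / L u u) * L u φ) :
    (B v v / L v v) * Real.sqrt (L v v) ≤
      (B u u / L u u) * Real.sqrt (L u u) :=
  stmt_15_general B Bk L hLsymm hBpos hLpos hle u v hv hiter
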